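/- Let V be a finite set and P a finite collection of nonempty subsets of V. For three nonempty subcollections S_1, S_2, S_3 ⊆ P, let C_i = ⋃ S_i, let T_1 be the set of points lying in exactly one of C_1, C_2, C_3, and T_{23} the set of points lying in at least two of them. In the uniform model on triples (f_1,f_2,f_3) of functions V → {0,1} with f_1+f_2+f_3 ≡ 1 (mod 2) pointwise, the probability that for each i some member of P is entirely inside f_i^{-1}(1) (i.e. all three liquids percolate) equals −∑_{S_1,S_2,S_3 nonempty subcollections of P} (−1)^{|S_1|+|S_2|+|S_3|} 2^{−|T_1|} 4^{−|T_{23}|}. -/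

import Mathlib

open Finset

/-- Cells lying in exactly one of the three sets. -/
def exactlyOne {V : Type*} [Fintype V] [DecidableEq V] (C1 C2 C3 : Finset V) : Finset V :=
  Finset.univ.filter fun v =>
    ((if v ∈ C1 then 1 else 0) + (if v ∈ C2 then 1 else 0) + (if v ∈ C3 then 1 else 0) : ℕ) = 1

/-- Cells lying in at least two of the three sets. -/
def atLeastTwo {V : Type*} [Fintype V] [DecidableEq V] (C1 C2 C3 : Finset V) : Finset V :=
  Finset.univ.filter fun v =>
    2 ≤ ((if v ∈ C1 then 1 else 0) + (if v ∈ C2 then 1 else 0) + (if v ∈ C3 then 1 else 0) : ℕ)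

lemma prod_neg' {α : Type*} (s : Finset α) (f : α → ℝ) :
    ∏ i ∈ s, (-f i) = (-1)^s.card * ∏ i ∈ s, f i := by
  rw [← Finset.prod_const, ← Finset.prod_mul_distrib]; simp

lemma ie_indicator {α : Type*} [DecidableEq α] (P : Finset α) (Q : α → Prop) [DecidablePred Q] :
    (if ∃ s ∈ P, Q s then (1:ℝ) else 0) =
      -∑ S ∈ P.powerset.erase ∅, (-1:ℝ) ^ S.card * (if ∀ s ∈ S, Q s then 1 else 0) := by
  have h1 : ∏ s ∈ P, ((if Q s then (-1:ℝ) else 0) + 1)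
      = ∑ S ∈ P.powerset, (-1:ℝ)^S.card * (if ∀ s ∈ S, Q s then 1 else 0) := by
    rw [Finset.prod_add]
    refine Finset.sum_congr rfl fun S hS => ?_
    rw [Finset.prod_const_one, mul_one]
    have h : ∀ s, (if Q s then (-1:ℝ) else 0) = -(if Q s then (1:ℝ) else 0) := by
      intro s; split <;> simp
    simp_rw [h]
    rw [prod_neg', Finset.prod_boole]
  have h2 : ∏ s ∈ P, ((if Q s then (-1:ℝ) else 0) + 1)
      = if ∀ s ∈ P, ¬ Q s then 1 else 0 := by
    have h : ∀ s, ((if Q s then (-1:ℝ) else 0) + 1) = if ¬ Q s then (1:ℝ) else 0 := by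
      intro s; split <;> simp_all
    simp_rw [h]
    exact Finset.prod_boole
  have hmem : (∅ : Finset α) ∈ P.powerset := Finset.empty_mem_powerset P
  have h3 := Finset.add_sum_erase _ (fun S => (-1:ℝ)^S.card * (if ∀ s ∈ S, Q s then 1 else 0)) hmem
  simp only [Finset.card_empty, pow_zero, Finset.notMem_empty, one_mul] at h3
  rw [if_pos (by simp)] at h3
  have h4 : ∑ S ∈ P.powerset.erase ∅, (-1:ℝ)^S.card * (if ∀ s ∈ S, Q s then 1 else 0)
      = (if ∀ s ∈ P, ¬ Q s then (1:ℝ) else 0) - 1 := by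
    rw [← h2, h1, ← h3]; ring
  rw [h4]
  by_cases h : ∃ s ∈ P, Q s
  · rw [if_pos h, if_neg (by push_neg; exact h)]; ring
  · rw [if_neg h, if_pos (by push_neg at h; exact h)]; ring

lemma mul_ind (p q : Prop) [Decidable p] [Decidable q] :
    (if p then (1:ℝ) else 0) * (if q then 1 else 0) = if p ∧ q then 1 else 0 := by
  split_ifs <;> simp_all

lemma trip_ind (p : Fin 3 → Prop) [∀ i, Decidable (p i)] :
    (if (∀ i : Fin 3, p i) then (1:ℝ) else 0)
      = (if p 0 then (1:ℝ) else 0) * (if p 1 then 1 else 0) * (if p 2 then 1 else 0) := by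
  rw [mul_ind, mul_ind]
  refine if_congr ?_ rfl rfl
  constructor
  · intro h; exact ⟨⟨h 0, h 1⟩, h 2⟩
  · rintro ⟨⟨a, b⟩, c⟩ i; fin_cases i <;> assumption

lemma card_ind {α : Type*} [Fintype α] (p : α → Prop) [DecidablePred p] :
    (Fintype.card {x // p x} : ℝ) = ∑ x : α, if p x then 1 else 0 := by
  rw [Fintype.card_subtype, Finset.card_filter]
  push_cast
  rfl

section CountSec
variable {V : Type*} [Fintype V] [DecidableEq V]

lemma cnt (p1 p2 p3 : Prop) [Decidable p1] [Decidable p2] [Decidable p3] :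
    Fintype.card {g : Fin 3 → ZMod 2 //
      (g 0 + g 1 + g 2 = 1) ∧ (p1 → g 0 = 1) ∧ (p2 → g 1 = 1) ∧ (p3 → g 2 = 1)}
    = if ((if p1 then 1 else 0) + (if p2 then 1 else 0) + (if p3 then 1 else 0) : ℕ) = 1 then 2
      else if 2 ≤ ((if p1 then 1 else 0) + (if p2 then 1 else 0) + (if p3 then 1 else 0) : ℕ)
        then 1 else 4 := by
  rw [Fintype.card_subtype]
  by_cases h1 : p1 <;> by_cases h2 : p2 <;> by_cases h3 : p3 <;> simp [h1, h2, h3] <;> decide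

def forcedEquiv (C1 C2 C3 : Finset V) :
    {F : Fin 3 → V → ZMod 2 //
      (∀ v, F 0 v + F 1 v + F 2 v = 1) ∧ (∀ v ∈ C1, F 0 v = 1) ∧ (∀ v ∈ C2, F 1 v = 1)
        ∧ (∀ v ∈ C3, F 2 v = 1)} ≃
    (∀ v : V, {g : Fin 3 → ZMod 2 //
      (g 0 + g 1 + g 2 = 1) ∧ (v ∈ C1 → g 0 = 1) ∧ (v ∈ C2 → g 1 = 1) ∧ (v ∈ C3 → g 2 = 1)}) where
  toFun F v := ⟨fun i => F.1 i v,
    F.2.1 v, fun h => F.2.2.1 v h, fun h => F.2.2.2.1 v h, fun h => F.2.2.2.2 v h⟩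
  invFun G := ⟨fun i v => (G v).1 i,
    fun v => (G v).2.1, fun v hv => (G v).2.2.1 hv, fun v hv => (G v).2.2.2.1 hv,
    fun v hv => (G v).2.2.2.2 hv⟩
  left_inv _ := rfl
  right_inv _ := rfl

lemma count_forced (C1 C2 C3 : Finset V) :
    (Fintype.card {F : Fin 3 → V → ZMod 2 //
      (∀ v, F 0 v + F 1 v + F 2 v = 1) ∧ (∀ v ∈ C1, F 0 v = 1) ∧ (∀ v ∈ C2, F 1 v = 1)
        ∧ (∀ v ∈ C3, F 2 v = 1)} : ℝ)
    = (4:ℝ) ^ Fintype.card V * (2:ℝ)⁻¹ ^ (exactlyOne C1 C2 C3).card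
        * (4:ℝ)⁻¹ ^ (atLeastTwo C1 C2 C3).card := by
  rw [Fintype.card_congr (forcedEquiv C1 C2 C3), Fintype.card_pi]
  push_cast
  have hpt : ∀ v : V, ((Fintype.card {g : Fin 3 → ZMod 2 //
      (g 0 + g 1 + g 2 = 1) ∧ (v ∈ C1 → g 0 = 1) ∧ (v ∈ C2 → g 1 = 1) ∧ (v ∈ C3 → g 2 = 1)} : ℝ))
      = 4 * (2:ℝ)⁻¹ ^ (if v ∈ exactlyOne C1 C2 C3 then 1 else 0)
          * (4:ℝ)⁻¹ ^ (if v ∈ atLeastTwo C1 C2 C3 then 1 else 0) := by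
    intro v
    rw [cnt]
    by_cases e1 : v ∈ exactlyOne C1 C2 C3
    · have h1 := (Finset.mem_filter.mp e1).2
      simp only [exactlyOne, atLeastTwo, Finset.mem_filter, Finset.mem_univ, true_and] at *
      rw [if_pos h1, if_pos e1, if_neg (by omega)]
      norm_num
    · by_cases e2 : v ∈ atLeastTwo C1 C2 C3
      · have h2 := (Finset.mem_filter.mp e2).2
        simp only [exactlyOne, atLeastTwo, Finset.mem_filter, Finset.mem_univ, true_and] at *
        rw [if_neg (by omega), if_pos h2, if_neg e1, if_pos e2]
        norm_num
      · simp only [exactlyOne, atLeastTwo, Finset.mem_filter, Finset.mem_univ, true_and] at *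
        rw [if_neg e1, if_neg e2, if_neg e1, if_neg e2]
        norm_num
  simp_rw [hpt]
  rw [Finset.prod_mul_distrib, Finset.prod_mul_distrib, Finset.prod_const,
    Finset.prod_pow_eq_pow_sum, Finset.prod_pow_eq_pow_sum]
  have hsum : ∀ (T : Finset V), (∑ v : V, if v ∈ T then 1 else 0) = T.card := by
    intro T; rw [← Finset.card_filter, Finset.filter_univ_mem]
  rw [hsum, hsum, Finset.card_univ]

lemma N_eq (S1 S2 S3 : Finset (Finset V)) :
    (Fintype.card {F : {F : Fin 3 → V → ZMod 2 // ∀ v : V, F 0 v + F 1 v + F 2 v = 1} //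
        (∀ s ∈ S1, ∀ v ∈ s, F.1 0 v = 1) ∧ (∀ s ∈ S2, ∀ v ∈ s, F.1 1 v = 1)
          ∧ (∀ s ∈ S3, ∀ v ∈ s, F.1 2 v = 1)} : ℝ)
    = (4:ℝ) ^ Fintype.card V
        * (2:ℝ)⁻¹ ^ (exactlyOne (S1.biUnion id) (S2.biUnion id) (S3.biUnion id)).card
        * (4:ℝ)⁻¹ ^ (atLeastTwo (S1.biUnion id) (S2.biUnion id) (S3.biUnion id)).card := by
  rw [← count_forced (S1.biUnion id) (S2.biUnion id) (S3.biUnion id)]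
  congr 1
  refine Fintype.card_congr ((Equiv.subtypeSubtypeEquivSubtypeInter
      (fun F : Fin 3 → V → ZMod 2 => ∀ v : V, F 0 v + F 1 v + F 2 v = 1)
      (fun F => (∀ s ∈ S1, ∀ v ∈ s, F 0 v = 1) ∧ (∀ s ∈ S2, ∀ v ∈ s, F 1 v = 1)
          ∧ (∀ s ∈ S3, ∀ v ∈ s, F 2 v = 1))).trans
    (Equiv.subtypeEquivRight fun F => ?_))
  simp only [Finset.mem_biUnion, id_eq]
  constructor
  · rintro ⟨hp, h1, h2, h3⟩
    exact ⟨hp, fun v ⟨s, hs, hv⟩ => h1 s hs v hv, fun v ⟨s, hs, hv⟩ => h2 s hs v hv,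
      fun v ⟨s, hs, hv⟩ => h3 s hs v hv⟩
  · rintro ⟨hp, h1, h2, h3⟩
    exact ⟨hp, fun s hs v hv => h1 v ⟨s, hs, hv⟩, fun s hs v hv => h2 v ⟨s, hs, hv⟩,
      fun s hs v hv => h3 v ⟨s, hs, hv⟩⟩

end CountSec

theorem stmt_17 (V : Type*) [Fintype V] [DecidableEq V] (P : Finset (Finset V))
    (hpaths : ∀ s ∈ P, s.Nonempty) :
    (Fintype.card {F : {F : Fin 3 → V → ZMod 2 //
        ∀ v : V, F 0 v + F 1 v + F 2 v = 1} //
        ∀ i : Fin 3, ∃ s ∈ P, ∀ v ∈ s, F.1 i v = 1} : ℝ) /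
      (4 : ℝ) ^ Fintype.card V =
    -∑ S1 ∈ P.powerset.erase ∅, ∑ S2 ∈ P.powerset.erase ∅, ∑ S3 ∈ P.powerset.erase ∅,
      (-1 : ℝ) ^ (S1.card + S2.card + S3.card) *
        (2 : ℝ)⁻¹ ^ (exactlyOne (S1.biUnion id) (S2.biUnion id) (S3.biUnion id)).card *
        (4 : ℝ)⁻¹ ^ (atLeastTwo (S1.biUnion id) (S2.biUnion id) (S3.biUnion id)).card := by
  classical
  set Ω := {F : Fin 3 → V → ZMod 2 // ∀ v : V, F 0 v + F 1 v + F 2 v = 1} with hΩ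
  have point : ∀ F : Ω,
      (if (∀ i : Fin 3, ∃ s ∈ P, ∀ v ∈ s, F.1 i v = 1) then (1:ℝ) else 0)
      = -∑ S1 ∈ P.powerset.erase ∅, ∑ S2 ∈ P.powerset.erase ∅, ∑ S3 ∈ P.powerset.erase ∅,
          (-1:ℝ)^(S1.card + S2.card + S3.card) *
          (if ((∀ s ∈ S1, ∀ v ∈ s, F.1 0 v = 1) ∧ (∀ s ∈ S2, ∀ v ∈ s, F.1 1 v = 1)
              ∧ (∀ s ∈ S3, ∀ v ∈ s, F.1 2 v = 1)) then 1 else 0) := by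
    intro F
    rw [trip_ind (fun i => ∃ s ∈ P, ∀ v ∈ s, F.1 i v = 1)]
    rw [ie_indicator P (fun s => ∀ v ∈ s, F.1 0 v = 1),
        ie_indicator P (fun s => ∀ v ∈ s, F.1 1 v = 1),
        ie_indicator P (fun s => ∀ v ∈ s, F.1 2 v = 1)]
    have hneg : ∀ A B C : ℝ, -A * -B * -C = -(A * B * C) := fun _ _ _ => by ring
    rw [hneg]
    congr 1
    rw [Finset.sum_mul_sum, Finset.sum_mul]
    refine Finset.sum_congr rfl fun S1 _ => ?_
    rw [Finset.sum_mul]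
    refine Finset.sum_congr rfl fun S2 _ => ?_
    rw [Finset.mul_sum]
    refine Finset.sum_congr rfl fun S3 _ => ?_
    simp only [pow_add, ← mul_ind]
    ring
  have hnum : (Fintype.card {F : Ω // ∀ i : Fin 3, ∃ s ∈ P, ∀ v ∈ s, F.1 i v = 1} : ℝ)
      = ∑ F : Ω, if (∀ i : Fin 3, ∃ s ∈ P, ∀ v ∈ s, F.1 i v = 1) then (1:ℝ) else 0 :=
    card_ind _
  rw [hnum]
  have swap : (∑ F : Ω, if (∀ i : Fin 3, ∃ s ∈ P, ∀ v ∈ s, F.1 i v = 1) then (1:ℝ) else 0)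
      = -∑ S1 ∈ P.powerset.erase ∅, ∑ S2 ∈ P.powerset.erase ∅, ∑ S3 ∈ P.powerset.erase ∅,
          (-1:ℝ)^(S1.card + S2.card + S3.card) *
          ∑ F : Ω, (if ((∀ s ∈ S1, ∀ v ∈ s, F.1 0 v = 1) ∧ (∀ s ∈ S2, ∀ v ∈ s, F.1 1 v = 1)
              ∧ (∀ s ∈ S3, ∀ v ∈ s, F.1 2 v = 1)) then (1:ℝ) else 0) := by
    rw [Finset.sum_congr rfl fun F _ => point F]
    rw [Finset.sum_neg_distrib]
    congr 1
    rw [Finset.sum_comm]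
    refine Finset.sum_congr rfl fun S1 _ => ?_
    rw [Finset.sum_comm]
    refine Finset.sum_congr rfl fun S2 _ => ?_
    rw [Finset.sum_comm]
    refine Finset.sum_congr rfl fun S3 _ => ?_
    rw [Finset.mul_sum]
  rw [swap]
  have hN : ∀ S1 S2 S3 : Finset (Finset V),
      (∑ F : Ω, (if ((∀ s ∈ S1, ∀ v ∈ s, F.1 0 v = 1) ∧ (∀ s ∈ S2, ∀ v ∈ s, F.1 1 v = 1)
          ∧ (∀ s ∈ S3, ∀ v ∈ s, F.1 2 v = 1)) then (1:ℝ) else 0))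
      = (4:ℝ) ^ Fintype.card V
          * (2:ℝ)⁻¹ ^ (exactlyOne (S1.biUnion id) (S2.biUnion id) (S3.biUnion id)).card
          * (4:ℝ)⁻¹ ^ (atLeastTwo (S1.biUnion id) (S2.biUnion id) (S3.biUnion id)).card := by
    intro S1 S2 S3
    rw [← card_ind, N_eq]
  simp_rw [hN]
  have h4 : (4:ℝ) ^ Fintype.card V ≠ 0 := by positivity
  rw [neg_div, Finset.sum_div]
  congr 1
  refine Finset.sum_congr rfl fun S1 _ => ?_
  rw [Finset.sum_div]
  refine Finset.sum_congr rfl fun S2 _ => ?_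
  rw [Finset.sum_div]
  refine Finset.sum_congr rfl fun S3 _ => ?_
  field_simp
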